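/- arXiv:1906.03694 — 5 statements merged into one kernel-verified Lean document; each statement's English description precedes it below -/
import Mathlib

section
/- Let A and S be finite sets, π₀ and π₁ probability mass functions on A × S with π₀(a,s) > 0 for all (a,s), ρ(a,s) = π₁(a,s)/π₀(a,s), and t : S → A a deterministic target policy with π₁(a,s) = 0 whenever a ≠ t(s). Let r : A × S → ℝ with r(a,s) ≥ 0 for all (a,s), let ρ̂ : A × S → ℝ, and let B : A × S → ℝ satisfy |ρ̂(a,s) − ρ(a,s)| ≤ B(a,s) for all (a,s). Then the expected bias of the estimated-weight importance sampling estimand obeys |∑_{(a,s)} 1{a = t(s)}·ρ̂(a,s)·r(a,s)·π₀(a,s) − ∑_{(a,s)} r(a,s)·π₁(a,s)| ≤ ∑_{s∈S} B(t(s), s)·r(t(s), s)·π₀(t(s), s). -/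
/-- Discrete-action bias bound (Proposition 3, discrete case): with nonnegative
rewards, estimated weights `rhoHat` satisfying `|rhoHat - ρ| ≤ B` pointwise,
and `p1` concentrated on the deterministic target policy `t`, the bias of the
estimated-weight importance sampling estimand is bounded by
`∑_s B(t s, s) · r(t s, s) · p0(t s, s)`. -/
theorem stmt_5 {A S : Type*} [Fintype A] [Fintype S] [DecidableEq A]
    (p0 p1 : A × S → ℝ)
    (hp0pos : ∀ x, 0 < p0 x) (hp0sum : ∑ x : A × S, p0 x = 1)
    (hp1nonneg : ∀ x, 0 ≤ p1 x) (hp1sum : ∑ x : A × S, p1 x = 1)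
    (t : S → A) (hconc : ∀ a s, a ≠ t s → p1 (a, s) = 0)
    (r : A × S → ℝ) (hr : ∀ x, 0 ≤ r x)
    (rhoHat : A × S → ℝ) (B : A × S → ℝ)
    (hBbound : ∀ x, |rhoHat x - p1 x / p0 x| ≤ B x) :
    |(∑ x : A × S, (if x.1 = t x.2 then (1:ℝ) else 0) * rhoHat x * r x * p0 x)
        - ∑ x : A × S, r x * p1 x|
      ≤ ∑ s : S, B (t s, s) * r (t s, s) * p0 (t s, s) := by
  have h1 : (∑ x : A × S, (if x.1 = t x.2 then (1:ℝ) else 0) * rhoHat x * r x * p0 x)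
      = ∑ s : S, rhoHat (t s, s) * r (t s, s) * p0 (t s, s) := by
    rw [Fintype.sum_prod_type, Finset.sum_comm]
    refine Finset.sum_congr rfl fun s _ => ?_
    rw [Finset.sum_eq_single (t s)]
    · simp
    · intro a _ ha; simp [ha]
    · simp
  have h2 : (∑ x : A × S, r x * p1 x) = ∑ s : S, r (t s, s) * p1 (t s, s) := by
    rw [Fintype.sum_prod_type, Finset.sum_comm]
    refine Finset.sum_congr rfl fun s _ => ?_
    rw [Finset.sum_eq_single (t s)]
    · intro a _ ha; simp [hconc a s ha]
    · simp
  rw [h1, h2, ← Finset.sum_sub_distrib]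
  refine (Finset.abs_sum_le_sum_abs _ _).trans (Finset.sum_le_sum fun s _ => ?_)
  have key : rhoHat (t s, s) * r (t s, s) * p0 (t s, s) - r (t s, s) * p1 (t s, s)
      = (rhoHat (t s, s) - p1 (t s, s) / p0 (t s, s)) * (r (t s, s) * p0 (t s, s)) := by
    have h0 : p0 (t s, s) ≠ 0 := (hp0pos _).ne'
    field_simp
  rw [key, abs_mul, mul_assoc]
  have habs : |r (t s, s) * p0 (t s, s)| = r (t s, s) * p0 (t s, s) :=
    abs_of_nonneg (mul_nonneg (hr _) (hp0pos _).le)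
  rw [habs]
  exact mul_le_mul_of_nonneg_right (hBbound _) (mul_nonneg (hr _) (hp0pos _).le)
end

section
/- Let A and S be finite sets, π₀ and π₁ probability mass functions on A × S with π₀(a,s) > 0 for all (a,s), ρ(a,s) = π₁(a,s)/π₀(a,s), and t : S → A a deterministic target policy with π₁(a,s) = 0 whenever a ≠ t(s). Let r : A × S → ℝ with r ≥ 0, let ρ̂ : A × S → ℝ with ρ̂ ≥ 0, and let B : A × S → ℝ with B ≥ 0 satisfy |ρ̂(a,s) − ρ(a,s)| ≤ B(a,s) for all (a,s). Then the second moment of a single estimated-weight importance sampling term satisfies ∑_{(a,s)} 1{a = t(s)}·ρ̂(a,s)²·r(a,s)²·π₀(a,s) ≤ ∑_{s∈S} ρ(t(s),s)·r(t(s),s)²·π₁(t(s),s) + ∑_{s∈S} r(t(s),s)²·(B(t(s),s)² + 2·B(t(s),s)·ρ(t(s),s))·π₀(t(s),s). -/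
/-- Discrete-action second-moment bound: with nonnegative rewards and
nonnegative estimated weights `rhoHat` satisfying `|rhoHat - ρ| ≤ B` pointwise
(`B ≥ 0`), the second moment of a single estimated-weight importance sampling
term is bounded by `∑_s ρ r² p1 + ∑_s r² (B² + 2 B ρ) p0` evaluated along the
target policy. -/
theorem stmt_6 {A S : Type*} [Fintype A] [Fintype S] [DecidableEq A]
    (p0 p1 : A × S → ℝ)
    (hp0pos : ∀ x, 0 < p0 x) (hp0sum : ∑ x : A × S, p0 x = 1)
    (hp1nonneg : ∀ x, 0 ≤ p1 x) (hp1sum : ∑ x : A × S, p1 x = 1)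
    (t : S → A) (hconc : ∀ a s, a ≠ t s → p1 (a, s) = 0)
    (r : A × S → ℝ) (hr : ∀ x, 0 ≤ r x)
    (rhoHat : A × S → ℝ) (hrhoHat : ∀ x, 0 ≤ rhoHat x)
    (B : A × S → ℝ) (hB : ∀ x, 0 ≤ B x)
    (hBbound : ∀ x, |rhoHat x - p1 x / p0 x| ≤ B x) :
    ∑ x : A × S, (if x.1 = t x.2 then (1:ℝ) else 0) * (rhoHat x)^2 * (r x)^2 * p0 x
      ≤ (∑ s : S, (p1 (t s, s) / p0 (t s, s)) * (r (t s, s))^2 * p1 (t s, s))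
        + ∑ s : S, (r (t s, s))^2
            * ((B (t s, s))^2 + 2 * B (t s, s) * (p1 (t s, s) / p0 (t s, s)))
            * p0 (t s, s) := by
  rw [Fintype.sum_prod_type_right, ← Finset.sum_add_distrib]
  apply Finset.sum_le_sum
  intro s _
  have hsum : ∑ a : A, (if a = t s then (1:ℝ) else 0) * (rhoHat (a, s))^2 * (r (a, s))^2 * p0 (a, s)
      = (rhoHat (t s, s))^2 * (r (t s, s))^2 * p0 (t s, s) := by
    rw [Finset.sum_eq_single (t s)]
    · simp
    · intro a _ h; simp [h]
    · simp
  rw [hsum]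
  set x := (t s, s)
  have h0 := hp0pos x
  have h1 := hp1nonneg x
  have hrx := hr x
  have hhx := hrhoHat x
  have hBx := hB x
  have habs := abs_le.mp (hBbound x)
  have hrho : (p1 x / p0 x) * p0 x = p1 x := div_mul_cancel₀ _ (ne_of_gt h0)
  have hρnn : 0 ≤ p1 x / p0 x := div_nonneg h1 h0.le
  have hsq : (rhoHat x - p1 x / p0 x)^2 ≤ (B x)^2 := sq_le_sq' habs.1 habs.2
  have hkey : (rhoHat x)^2 ≤ (p1 x / p0 x)^2 + 2 * B x * (p1 x / p0 x) + (B x)^2 := by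
    nlinarith [mul_le_mul_of_nonneg_left habs.2 hρnn]
  have hmain : (rhoHat x)^2 * (r x)^2 * p0 x
      ≤ ((p1 x / p0 x)^2 + 2 * B x * (p1 x / p0 x) + (B x)^2) * (r x)^2 * p0 x := by
    apply mul_le_mul_of_nonneg_right _ h0.le
    exact mul_le_mul_of_nonneg_right hkey (sq_nonneg _)
  have hrho2 : (p1 x / p0 x) * (r x)^2 * p1 x = (p1 x / p0 x)^2 * (r x)^2 * p0 x := by
    field_simp
  rw [hrho2]; nlinarith [hmain]
end

section
/- Let A and S be finite sets, π₀ and π₁ probability mass functions on A × S with π₀(a,s) > 0 for all (a,s), ρ = π₁/π₀, t : S → A a deterministic target policy with π₁(a,s) = 0 whenever a ≠ t(s), r : A × S → ℝ with r ≥ 0, ρ̂ ≥ 0 an estimated weight function, and B ≥ 0 with |ρ̂ − ρ| ≤ B pointwise. Fix n ≥ 1 and let (a₁,s₁),…,(aₙ,sₙ) be i.i.d. draws from π₀ (that is, consider the product measure π₀^⊗n on (A × S)^n). Define the estimator V̂ = (1/n)·∑_{i=1}^n 1{aᵢ = t(sᵢ)}·ρ̂(aᵢ,sᵢ)·r(aᵢ,sᵢ).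 Then the variance of V̂ under the product measure satisfies Var(V̂) ≤ (1/n)·( ∑_{s∈S} ρ(t(s),s)·r(t(s),s)²·π₁(t(s),s) + ∑_{s∈S} r(t(s),s)²·(B(t(s),s)² + 2·B(t(s),s)·ρ(t(s),s))·π₀(t(s),s) ). -/
section aux
variable {ι X : Type*} [Fintype ι] [DecidableEq ι] [Fintype X]

lemma sum_pi_prod (g : ι → X → ℝ) :
    ∑ ω : ι → X, ∏ i, g i (ω i) = ∏ i, ∑ x, g i x := by
  rw [Finset.prod_univ_sum, Fintype.piFinset_univ]

lemma total_sum (p0 : X → ℝ) (hs : ∑ x, p0 x = 1) :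
    ∑ ω : ι → X, ∏ i, p0 (ω i) = 1 := by
  rw [sum_pi_prod (fun _ x => p0 x)]
  simp [hs]

lemma single_sum (p0 f : X → ℝ) (hs : ∑ x, p0 x = 1) (j : ι) :
    ∑ ω : ι → X, (∏ i, p0 (ω i)) * f (ω j) = ∑ x, p0 x * f x := by
  have h1 : ∀ ω : ι → X, (∏ i, p0 (ω i)) * f (ω j)
      = ∏ i, (if i = j then p0 (ω i) * f (ω i) else p0 (ω i)) := by
    intro ω
    rw [← Finset.mul_prod_erase Finset.univ (fun i => p0 (ω i)) (Finset.mem_univ j),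
        ← Finset.mul_prod_erase Finset.univ
          (fun i => if i = j then p0 (ω i) * f (ω i) else p0 (ω i)) (Finset.mem_univ j)]
    have h2 : ∀ i ∈ Finset.univ.erase j,
        (if i = j then p0 (ω i) * f (ω i) else p0 (ω i)) = p0 (ω i) :=
      fun i hi => if_neg (Finset.ne_of_mem_erase hi)
    rw [Finset.prod_congr rfl h2]
    simp only [if_pos rfl, if_true]
    ring
  rw [Finset.sum_congr rfl (fun ω _ => h1 ω),
      sum_pi_prod (fun i x => if i = j then p0 x * f x else p0 x)]
  have h2 : ∀ i ∈ (Finset.univ : Finset ι),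
      (∑ x, if i = j then p0 x * f x else p0 x)
        = if i = j then ∑ x, p0 x * f x else 1 := by
    intro i _; split <;> simp [hs]
  rw [Finset.prod_congr rfl h2, Finset.prod_ite_eq' Finset.univ j (fun _ => ∑ x, p0 x * f x)]
  simp

lemma pair_sum (p0 f : X → ℝ) (hs : ∑ x, p0 x = 1) (j k : ι) (hjk : j ≠ k) :
    ∑ ω : ι → X, (∏ i, p0 (ω i)) * (f (ω j) * f (ω k))
      = (∑ x, p0 x * f x) * (∑ x, p0 x * f x) := by
  have hk : k ∈ Finset.univ.erase j := Finset.mem_erase.2 ⟨hjk.symm, Finset.mem_univ k⟩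
  have h1 : ∀ ω : ι → X, (∏ i, p0 (ω i)) * (f (ω j) * f (ω k))
      = ∏ i, (if i = j then p0 (ω i) * f (ω i)
          else if i = k then p0 (ω i) * f (ω i) else p0 (ω i)) := by
    intro ω
    rw [← Finset.mul_prod_erase Finset.univ (fun i => p0 (ω i)) (Finset.mem_univ j),
        ← Finset.mul_prod_erase _ (fun i => p0 (ω i)) hk,
        ← Finset.mul_prod_erase Finset.univ
          (fun i => if i = j then p0 (ω i) * f (ω i)
            else if i = k then p0 (ω i) * f (ω i) else p0 (ω i)) (Finset.mem_univ j),
        ← Finset.mul_prod_erase _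
          (fun i => if i = j then p0 (ω i) * f (ω i)
            else if i = k then p0 (ω i) * f (ω i) else p0 (ω i)) hk]
    have h2 : ∀ i ∈ (Finset.univ.erase j).erase k,
        (if i = j then p0 (ω i) * f (ω i)
          else if i = k then p0 (ω i) * f (ω i) else p0 (ω i)) = p0 (ω i) := by
      intro i hi
      rw [if_neg (Finset.ne_of_mem_erase (Finset.mem_of_mem_erase hi)),
          if_neg (Finset.ne_of_mem_erase hi)]
    rw [Finset.prod_congr rfl h2]
    simp only [if_pos rfl, if_true, if_neg hjk, if_neg hjk.symm]
    ring
  rw [Finset.sum_congr rfl (fun ω _ => h1 ω),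
      sum_pi_prod (fun i x => if i = j then p0 x * f x
        else if i = k then p0 x * f x else p0 x)]
  have h2 : ∀ i ∈ (Finset.univ : Finset ι),
      (∑ x, if i = j then p0 x * f x else if i = k then p0 x * f x else p0 x)
        = if i = j then ∑ x, p0 x * f x
          else if i = k then ∑ x, p0 x * f x else 1 := by
    intro i _
    split
    · rfl
    · split <;> simp [hs]
  rw [Finset.prod_congr rfl h2,
      ← Finset.mul_prod_erase Finset.univ _ (Finset.mem_univ j),
      ← Finset.mul_prod_erase _ _ hk]
  have h3 : ∀ i ∈ (Finset.univ.erase j).erase k,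
      (if i = j then ∑ x, p0 x * f x
        else if i = k then ∑ x, p0 x * f x else 1) = 1 := by
    intro i hi
    rw [if_neg (Finset.ne_of_mem_erase (Finset.mem_of_mem_erase hi)),
        if_neg (Finset.ne_of_mem_erase hi)]
  rw [Finset.prod_congr rfl h3]
  simp only [if_pos rfl, if_true, if_neg hjk, ite_self, Finset.prod_const_one]
  ring

end aux

/-- Discrete-action variance bound (Proposition 4, discrete case): for `n`
i.i.d. draws from `p0` (product mass function `P ω = ∏ i, p0 (ω i)`), the
variance of the estimated-weight importance sampling estimator
`Vhat ω = (1/n) ∑ i 1{aᵢ = t sᵢ} rhoHat(aᵢ,sᵢ) r(aᵢ,sᵢ)` is bounded by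
`(1/n) (∑_s ρ r² p1 + ∑_s r² (B² + 2 B ρ) p0)` along the target policy. -/
theorem stmt_7 {A S : Type*} [Fintype A] [Fintype S] [DecidableEq A]
    (p0 p1 : A × S → ℝ)
    (hp0pos : ∀ x, 0 < p0 x) (hp0sum : ∑ x : A × S, p0 x = 1)
    (hp1nonneg : ∀ x, 0 ≤ p1 x) (hp1sum : ∑ x : A × S, p1 x = 1)
    (t : S → A) (hconc : ∀ a s, a ≠ t s → p1 (a, s) = 0)
    (r : A × S → ℝ) (hr : ∀ x, 0 ≤ r x)
    (rhoHat : A × S → ℝ) (hrhoHat : ∀ x, 0 ≤ rhoHat x)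
    (B : A × S → ℝ) (hB : ∀ x, 0 ≤ B x)
    (hBbound : ∀ x, |rhoHat x - p1 x / p0 x| ≤ B x)
    (n : ℕ) (hn : 1 ≤ n)
    (P : (Fin n → A × S) → ℝ) (hP : ∀ ω, P ω = ∏ i, p0 (ω i))
    (Vhat : (Fin n → A × S) → ℝ)
    (hV : ∀ ω, Vhat ω = (1 / (n : ℝ)) *
      ∑ i, (if (ω i).1 = t (ω i).2 then (1:ℝ) else 0) * rhoHat (ω i) * r (ω i)) :
    ∑ ω : Fin n → A × S, P ω * (Vhat ω - ∑ ω' : Fin n → A × S, P ω' * Vhat ω')^2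
      ≤ (1 / (n : ℝ)) *
        ((∑ s : S, (p1 (t s, s) / p0 (t s, s)) * (r (t s, s))^2 * p1 (t s, s))
          + ∑ s : S, (r (t s, s))^2
              * ((B (t s, s))^2 + 2 * B (t s, s) * (p1 (t s, s) / p0 (t s, s)))
              * p0 (t s, s)) := by
  have hn0 : (n : ℝ) ≠ 0 := Nat.cast_ne_zero.2 (by omega)
  have hnpos : (0:ℝ) < n := by positivity
  set f : A × S → ℝ := fun x => (if x.1 = t x.2 then (1:ℝ) else 0) * rhoHat x * r x with hf
  set μ : ℝ := ∑ x : A × S, p0 x * f x with hμ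
  set m2 : ℝ := ∑ x : A × S, p0 x * (f x)^2 with hm2def
  have hVf : ∀ ω, Vhat ω = (1 / (n : ℝ)) * ∑ i, f (ω i) := hV
  have hPsum : ∑ ω : Fin n → A × S, P ω = 1 := by
    rw [Finset.sum_congr rfl fun ω _ => hP ω]
    exact total_sum p0 hp0sum
  -- mean
  have hmean : ∑ ω' : Fin n → A × S, P ω' * Vhat ω' = μ := by
    have step : ∀ ω : Fin n → A × S, P ω * Vhat ω
        = ∑ i, (1 / (n : ℝ)) * ((∏ i', p0 (ω i')) * f (ω i)) := by
      intro ω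
      rw [hVf, hP, Finset.mul_sum, Finset.mul_sum]
      exact Finset.sum_congr rfl fun i _ => by ring
    rw [Finset.sum_congr rfl fun ω _ => step ω, Finset.sum_comm]
    have h2 : ∀ i : Fin n,
        ∑ ω : Fin n → A × S, (1 / (n : ℝ)) * ((∏ i', p0 (ω i')) * f (ω i))
          = (1 / (n : ℝ)) * μ := by
      intro i
      rw [← Finset.mul_sum, single_sum p0 f hp0sum i]
    rw [Finset.sum_congr rfl fun i _ => h2 i, Finset.sum_const]
    simp only [Finset.card_univ, Fintype.card_fin, nsmul_eq_mul]
    field_simp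
  -- second moment
  have hE2 : ∑ ω : Fin n → A × S, P ω * (Vhat ω)^2
      = (1 / (n : ℝ))^2 * ((n : ℝ) * ((n : ℝ) * (μ * μ) + (m2 - μ * μ))) := by
    have step : ∀ ω : Fin n → A × S, P ω * (Vhat ω)^2
        = ∑ i, ∑ j, (1 / (n : ℝ))^2 * ((∏ i', p0 (ω i')) * (f (ω i) * f (ω j))) := by
      intro ω
      rw [hVf, hP, pow_two,
        show ((1 / (n:ℝ)) * ∑ i, f (ω i)) * ((1 / (n:ℝ)) * ∑ i, f (ω i))
          = (1 / (n:ℝ))^2 * ((∑ i, f (ω i)) * (∑ j, f (ω j))) from by ring,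
        Finset.sum_mul_sum, Finset.mul_sum, Finset.mul_sum]
      refine Finset.sum_congr rfl fun i _ => ?_
      rw [Finset.mul_sum, Finset.mul_sum]
      exact Finset.sum_congr rfl fun j _ => by ring
    rw [Finset.sum_congr rfl fun ω _ => step ω, Finset.sum_comm]
    have hinner : ∀ i : Fin n,
        ∑ ω : Fin n → A × S, ∑ j, (1 / (n : ℝ))^2 * ((∏ i', p0 (ω i')) * (f (ω i) * f (ω j)))
          = ∑ j, (1 / (n : ℝ))^2 * (if i = j then m2 else μ * μ) := by
      intro i
      rw [Finset.sum_comm]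
      refine Finset.sum_congr rfl fun j _ => ?_
      rw [← Finset.mul_sum]
      congr 1
      by_cases hij : i = j
      · subst hij
        rw [if_pos rfl,
          show (∑ ω : Fin n → A × S, (∏ i', p0 (ω i')) * (f (ω i) * f (ω i)))
            = ∑ ω : Fin n → A × S, (∏ i', p0 (ω i')) * ((fun x => (f x)^2) (ω i)) from
            Finset.sum_congr rfl fun ω _ => by simp [pow_two],
          single_sum p0 (fun x => (f x)^2) hp0sum i]
      · rw [if_neg hij, pair_sum p0 f hp0sum i j hij]
    rw [Finset.sum_congr rfl fun i _ => hinner i]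
    have h3 : ∀ i : Fin n,
        ∑ j, (1 / (n : ℝ))^2 * (if i = j then m2 else μ * μ)
          = (1 / (n : ℝ))^2 * ((n : ℝ) * (μ * μ) + (m2 - μ * μ)) := by
      intro i
      rw [← Finset.mul_sum]
      congr 1
      rw [Finset.sum_congr rfl (fun j _ =>
        show (if i = j then m2 else μ * μ)
          = μ * μ + (if i = j then m2 - μ * μ else 0) from by split <;> ring)]
      rw [Finset.sum_add_distrib, Finset.sum_const, Finset.sum_ite_eq Finset.univ i
        (fun _ => m2 - μ * μ)]
      simp only [Finset.card_univ, Fintype.card_fin, nsmul_eq_mul, Finset.mem_univ, if_pos]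
    rw [Finset.sum_congr rfl fun i _ => h3 i, Finset.sum_const]
    simp only [Finset.card_univ, Fintype.card_fin, nsmul_eq_mul]
    ring
  -- variance identity
  have hvar : ∑ ω : Fin n → A × S, P ω * (Vhat ω - μ)^2
      = (∑ ω : Fin n → A × S, P ω * (Vhat ω)^2) - μ^2 := by
    have step : ∀ ω : Fin n → A × S, P ω * (Vhat ω - μ)^2
        = P ω * (Vhat ω)^2 - 2 * μ * (P ω * Vhat ω) + μ^2 * P ω := by
      intro ω; ring
    rw [Finset.sum_congr rfl fun ω _ => step ω, Finset.sum_add_distrib,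
      Finset.sum_sub_distrib, ← Finset.mul_sum, ← Finset.mul_sum, hmean, hPsum]
    ring
  -- m2 as a sum over states
  have hm2eq : m2 = ∑ s : S, p0 (t s, s) * (rhoHat (t s, s) * r (t s, s))^2 := by
    rw [hm2def, Fintype.sum_prod_type_right]
    refine Finset.sum_congr rfl fun s _ => ?_
    have h4 : ∀ a : A, p0 (a, s) * (f (a, s))^2
        = if a = t s then p0 (a, s) * (rhoHat (a, s) * r (a, s))^2 else 0 := by
      intro a
      by_cases h : a = t s
      · rw [if_pos h]; simp only [hf, if_pos h]; ring
      · rw [if_neg h]; simp only [hf, if_neg h]; ring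
    rw [Finset.sum_congr rfl fun a _ => h4 a,
      Finset.sum_ite_eq' Finset.univ (t s) (fun a => p0 (a, s) * (rhoHat (a, s) * r (a, s))^2)]
    simp
  -- pointwise bound
  have hpt : ∀ s : S, p0 (t s, s) * (rhoHat (t s, s) * r (t s, s))^2
      ≤ (p1 (t s, s) / p0 (t s, s)) * (r (t s, s))^2 * p1 (t s, s)
        + (r (t s, s))^2
            * ((B (t s, s))^2 + 2 * B (t s, s) * (p1 (t s, s) / p0 (t s, s)))
            * p0 (t s, s) := by
    intro s
    set x : A × S := (t s, s) with hx
    have hp0x := hp0pos x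
    have hρ : 0 ≤ p1 x / p0 x := div_nonneg (hp1nonneg x) hp0x.le
    have hle : rhoHat x ≤ p1 x / p0 x + B x := by
      have := (abs_le.mp (hBbound x)).2; linarith
    have hsq : (rhoHat x)^2 ≤ (p1 x / p0 x + B x)^2 :=
      pow_le_pow_left₀ (hrhoHat x) hle 2
    have hp1eq : p1 x / p0 x * p0 x = p1 x := div_mul_cancel₀ _ hp0x.ne'
    calc p0 x * (rhoHat x * r x)^2 = (p0 x * (r x)^2) * (rhoHat x)^2 := by ring
      _ ≤ (p0 x * (r x)^2) * (p1 x / p0 x + B x)^2 :=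
          mul_le_mul_of_nonneg_left hsq (by positivity)
      _ = (p1 x / p0 x) * (r x)^2 * (p1 x / p0 x * p0 x)
            + (r x)^2 * ((B x)^2 + 2 * B x * (p1 x / p0 x)) * p0 x := by ring
      _ = (p1 x / p0 x) * (r x)^2 * p1 x
            + (r x)^2 * ((B x)^2 + 2 * B x * (p1 x / p0 x)) * p0 x := by rw [hp1eq]
  have hm2le : m2 ≤ (∑ s : S, (p1 (t s, s) / p0 (t s, s)) * (r (t s, s))^2 * p1 (t s, s))
      + ∑ s : S, (r (t s, s))^2
          * ((B (t s, s))^2 + 2 * B (t s, s) * (p1 (t s, s) / p0 (t s, s)))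
          * p0 (t s, s) := by
    rw [hm2eq, ← Finset.sum_add_distrib]
    exact Finset.sum_le_sum fun s _ => hpt s
  -- conclude
  rw [hmean, hvar, hE2]
  have hμsq : 0 ≤ μ^2 := sq_nonneg μ
  have h1n : (0:ℝ) < 1 / n := by positivity
  have hrewrite : (1 / (n : ℝ))^2 * ((n : ℝ) * ((n : ℝ) * (μ * μ) + (m2 - μ * μ))) - μ^2
      = (1 / (n : ℝ)) * m2 - (1 / (n : ℝ)) * μ^2 := by
    field_simp; ring
  rw [hrewrite]
  have := mul_le_mul_of_nonneg_left hm2le h1n.le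
  linarith [mul_nonneg h1n.le hμsq]
end

section
/- Let S be a finite set, let π₁ : ℝ × S → ℝ be a nonnegative joint density (∑_{s∈S} ∫_ℝ π₁(a,s) da = 1), let t : S → ℝ be a deterministic target policy, and let r : ℝ × S → ℝ. Suppose that for each s ∈ S the function a ↦ r(a,s)·π₁(a,s) is twice differentiable with second derivative bounded in absolute value by M. Let K : ℝ → ℝ be integrable with ∫ K = 1, ∫ u·K(u) du = 0, and κ₂ := ∫ u²·|K(u)| du < ∞. Then for every h > 0, |∑_{s∈S} (1/h)·∫_ℝ K((a − t(s))/h)·r(a,s)·π₁(a,s) da − ∑_{s∈S} r(t(s), s)·π₁(t(s), s)| ≤ |S|·(M·κ₂/2)·h², where |S| is the cardinality of S. -/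
/-!
After the substitution `a = t s + h u`, the smoothed value at `t s` is `∫ K(u) g(t s + h u) du`
with `g = r(·, s) p1(·, s)`. Expanding `g` to first order around `t s`, the constant term
reproduces `g (t s)` because `∫ K = 1`, the linear term vanishes because `∫ u K = 0`, and the
Taylor remainder is at most `M (h u)² / 2`, which integrates against `|K|` to `M κ₂ h² / 2`.
Summing over the finitely many states gives the factor `|S|`.
-/

open MeasureTheory

theorem intervalIntegral_abs_sub_left (x y : ℝ) :
    ∫ z in x..y, |z - x| = (y - x) * |y - x| / 2 := by
  rw [intervalIntegral.integral_comp_sub_right (fun u => |u|), sub_self]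
  rcases le_or_gt 0 (y - x) with hyx | hyx
  · rw [abs_of_nonneg hyx, intervalIntegral.integral_congr (g := fun u => u), integral_id]
    · ring
    · intro u hu
      rw [Set.uIcc_of_le hyx] at hu
      exact abs_of_nonneg hu.1
  · rw [abs_of_neg hyx, intervalIntegral.integral_congr (g := fun u => -u),
      intervalIntegral.integral_neg, integral_id]
    · ring
    · intro u hu
      rw [Set.uIcc_of_ge hyx.le] at hu
      exact abs_of_nonpos hu.2

theorem abs_sub_sub_deriv_mul_le {g : ℝ → ℝ} {M : ℝ} (hg : Differentiable ℝ g)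
    (hg' : Differentiable ℝ (deriv g)) (hg'' : ∀ z, |deriv (deriv g) z| ≤ M) (x y : ℝ) :
    |g y - g x - deriv g x * (y - x)| ≤ M * (y - x) ^ 2 / 2 := by
  have hM : 0 ≤ M := (abs_nonneg _).trans (hg'' 0)
  have hlip : ∀ z, |deriv g z - deriv g x| ≤ M * |z - x| := fun z =>
    Convex.norm_image_sub_le_of_norm_deriv_le (fun w _ => hg' w) (fun w _ => hg'' w)
      convex_univ (Set.mem_univ x) (Set.mem_univ z)
  have hftc : g y - g x - deriv g x * (y - x) = ∫ z in x..y, (deriv g z - deriv g x) := by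
    rw [intervalIntegral.integral_eq_sub_of_hasDerivAt
      (f := fun w => g w - w * deriv g x)
      (fun z _ => (hg z).hasDerivAt.sub (hasDerivAt_mul_const (deriv g x)))
      ((hg'.continuous.sub continuous_const).intervalIntegrable x y)]
    ring
  calc |g y - g x - deriv g x * (y - x)|
      ≤ |(∫ z in x..y, M * |z - x|)| := by
        rw [hftc]
        exact intervalIntegral.norm_integral_le_abs_of_norm_le
          (f := fun z => deriv g z - deriv g x) (.of_forall hlip)
          ((by fun_prop : Continuous fun z => M * |z - x|).intervalIntegrable x y)
    _ = M * (y - x) ^ 2 / 2 := by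
        rw [intervalIntegral.integral_const_mul, intervalIntegral_abs_sub_left, abs_mul,
          abs_of_nonneg hM, abs_div, abs_mul, abs_abs, abs_two, ← sq, sq_abs]
        ring

theorem one_div_mul_integral_comp_sub_div (K g : ℝ → ℝ) {h : ℝ} (hh : 0 < h) (c : ℝ) :
    (1 / h) * ∫ a, K ((a - c) / h) * g a = ∫ u, K u * g (h * u + c) := by
  have hsubst : (fun u => K u * g (h * u + c))
      = fun u => (fun a => K ((a - c) / h) * g a) (h * u + c) := by
    funext u
    show _ = K ((h * u + c - c) / h) * g (h * u + c)
    rw [add_sub_cancel_right, mul_div_cancel_left₀ u hh.ne']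
  rw [hsubst, Measure.integral_comp_mul_left (fun a => K ((a + c - c) / h) * g (a + c)),
    integral_add_right_eq_self (fun a => K ((a - c) / h) * g a) c,
    abs_of_pos (inv_pos.mpr hh), smul_eq_mul, one_div]

theorem abs_one_div_mul_integral_kernel_sub_le {g : ℝ → ℝ} {M : ℝ} (hg : Differentiable ℝ g)
    (hg' : Differentiable ℝ (deriv g)) (hg'' : ∀ z, |deriv (deriv g) z| ≤ M)
    {K : ℝ → ℝ} (hKint : Integrable K) (hK1 : ∫ u, K u = 1)
    (hKu : Integrable (fun u => u * K u)) (hKu0 : ∫ u, u * K u = 0)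
    (hKu2 : Integrable (fun u => u ^ 2 * |K u|)) {h : ℝ} (hh : 0 < h) (c : ℝ) :
    |(1 / h) * (∫ a, K ((a - c) / h) * g a) - g c|
      ≤ M * (∫ u, u ^ 2 * |K u|) / 2 * h ^ 2 := by
  set R : ℝ → ℝ := fun u => g (h * u + c) - g c - deriv g c * (h * u)
  have hR : ∀ u, |K u * R u| ≤ M * h ^ 2 / 2 * (u ^ 2 * |K u|) := fun u => by
    have := abs_sub_sub_deriv_mul_le hg hg' hg'' c (h * u + c)
    rw [add_sub_cancel_right] at this
    rw [abs_mul]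
    nlinarith [abs_nonneg (K u)]
  have hRcont : Continuous R := by
    have := hg.continuous
    show Continuous fun u => g (h * u + c) - g c - deriv g c * (h * u)
    fun_prop
  have hKR : Integrable (fun u => K u * R u) :=
    (hKu2.const_mul _).mono' (hKint.aestronglyMeasurable.mul hRcont.aestronglyMeasurable)
      (.of_forall hR)
  have hexpand : ∫ u, K u * g (h * u + c) = g c + ∫ u, K u * R u := by
    have hsplit : (fun u => K u * g (h * u + c))
        = fun u => (g c * K u + h * deriv g c * (u * K u)) + K u * R u := by
      funext u
      ring
    rw [hsplit, integral_add ?_ hKR, integral_add (hKint.const_mul _) (hKu.const_mul _),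
      integral_const_mul, integral_const_mul, hK1, hKu0]
    · ring
    · exact (hKint.const_mul _).add (hKu.const_mul _)
  rw [one_div_mul_integral_comp_sub_div K g hh c, hexpand, add_sub_cancel_left]
  calc ‖∫ u, K u * R u‖ ≤ ∫ u, M * h ^ 2 / 2 * (u ^ 2 * |K u|) :=
        norm_integral_le_of_norm_le (hKu2.const_mul _) (.of_forall hR)
    _ = M * (∫ u, u ^ 2 * |K u|) / 2 * h ^ 2 := by
        rw [integral_const_mul]
        ring

theorem stmt_9_general {S : Type*} [Fintype S]
    (p1 : ℝ × S → ℝ)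
    (t : S → ℝ) (r : ℝ × S → ℝ) (M : ℝ)
    (hg : ∀ (s : S) (x : ℝ), DifferentiableAt ℝ (fun a => r (a, s) * p1 (a, s)) x)
    (hg' : ∀ (s : S) (x : ℝ),
      DifferentiableAt ℝ (deriv (fun a => r (a, s) * p1 (a, s))) x)
    (hg'' : ∀ (s : S) (x : ℝ),
      |deriv (deriv (fun a => r (a, s) * p1 (a, s))) x| ≤ M)
    (K : ℝ → ℝ) (hKint : Integrable K) (hK1 : ∫ u, K u = 1)
    (hKu : Integrable (fun u => u * K u)) (hKu0 : ∫ u, u * K u = 0)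
    (hKu2 : Integrable (fun u => u ^ 2 * |K u|))
    (h : ℝ) (hh : 0 < h) :
    |(∑ s : S, (1 / h) * ∫ a, K ((a - t s) / h) * (r (a, s) * p1 (a, s)))
        - ∑ s : S, r (t s, s) * p1 (t s, s)|
      ≤ (Fintype.card S : ℝ) * (M * (∫ u, u ^ 2 * |K u|) / 2) * h ^ 2 := by
  rw [← Finset.sum_sub_distrib]
  calc _ ≤ ∑ s : S, |(1 / h) * (∫ a, K ((a - t s) / h) * (r (a, s) * p1 (a, s)))
          - r (t s, s) * p1 (t s, s)| := Finset.abs_sum_le_sum_abs _ _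
    _ ≤ ∑ _s : S, M * (∫ u, u ^ 2 * |K u|) / 2 * h ^ 2 := Finset.sum_le_sum fun s _ =>
        abs_one_div_mul_integral_kernel_sub_le (hg s) (hg' s) (hg'' s) hKint hK1 hKu hKu0 hKu2
          hh (t s)
    _ = (Fintype.card S : ℝ) * (M * (∫ u, u ^ 2 * |K u|) / 2) * h ^ 2 := by
        rw [Finset.sum_const, nsmul_eq_mul, Finset.card_univ]
        ring

/-- Continuous-action leading-term bound: for a joint density `p1` on `ℝ × S`
(`S` finite), a deterministic target policy `t : S → ℝ`, rewards `r` such that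
`a ↦ r(a,s) p1(a,s)` is twice differentiable with second derivative bounded by
`M`, and a kernel `K` with `∫ K = 1`, vanishing first moment and second
absolute moment `κ₂`, the kernel-smoothed estimand is within
`|S| (M κ₂ / 2) h²` of `∑_s r(t s, s) p1(t s, s)`. -/
theorem stmt_9 {S : Type*} [Fintype S]
    (p1 : ℝ × S → ℝ) (hp1nonneg : ∀ x, 0 ≤ p1 x)
    (hp1int : ∀ s : S, Integrable (fun a => p1 (a, s)))
    (hp1sum : ∑ s : S, ∫ a, p1 (a, s) = 1)
    (t : S → ℝ) (r : ℝ × S → ℝ) (M : ℝ)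
    (hg : ∀ (s : S) (x : ℝ), DifferentiableAt ℝ (fun a => r (a, s) * p1 (a, s)) x)
    (hg' : ∀ (s : S) (x : ℝ),
      DifferentiableAt ℝ (deriv (fun a => r (a, s) * p1 (a, s))) x)
    (hg'' : ∀ (s : S) (x : ℝ),
      |deriv (deriv (fun a => r (a, s) * p1 (a, s))) x| ≤ M)
    (K : ℝ → ℝ) (hKint : Integrable K) (hK1 : ∫ u, K u = 1)
    (hKu : Integrable (fun u => u * K u)) (hKu0 : ∫ u, u * K u = 0)
    (hKu2 : Integrable (fun u => u ^ 2 * |K u|))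
    (h : ℝ) (hh : 0 < h) :
    |(∑ s : S, (1 / h) * ∫ a, K ((a - t s) / h) * (r (a, s) * p1 (a, s)))
        - ∑ s : S, r (t s, s) * p1 (t s, s)|
      ≤ (Fintype.card S : ℝ) * (M * (∫ u, u ^ 2 * |K u|) / 2) * h ^ 2 :=
  stmt_9_general p1 t r M hg hg' hg'' K hKint hK1 hKu hKu0 hKu2 h hh
end

section
/- Let S be a finite set, π₀, π₁ : ℝ × S → ℝ nonnegative joint densities with π₀(a,s) > 0 for all (a,s), ρ(a,s) = π₁(a,s)/π₀(a,s), t : S → ℝ a deterministic target policy, r : ℝ × S → ℝ with r ≥ 0, ρ̂ : ℝ × S → ℝ with ρ̂ ≥ 0, and B : ℝ × S → ℝ with B ≥ 0 and |ρ̂(a,s) − ρ(a,s)| ≤ B(a,s) for all (a,s). Let K : ℝ → ℝ satisfy R(K) := ∫ K(u)² du < ∞ and κ := ∫ |u|·K(u)² du < ∞, and suppose for each s ∈ S the function a ↦ ρ̂(a,s)²·r(a,s)²·π₀(a,s) is bounded and Lipschitz with constant L. Then for every h > 0, (1/h²)·∑_{s∈S} ∫_ℝ K((a − t(s))/h)²·ρ̂(a,s)²·r(a,s)²·π₀(a,s)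 da ≤ (R(K)/h)·∑_{s∈S} [ ρ(t(s),s)·r(t(s),s)²·π₁(t(s),s) + r(t(s),s)²·(B(t(s),s)² + 2·B(t(s),s)·ρ(t(s),s))·π₀(t(s),s) ] + |S|·L·κ. -/
open MeasureTheory

/-!
Substituting `a = t s + h u` turns the integral for state `s` into `h ∫ K(u)² g_s(t s + h u) du`,
where `g_s = ρ̂² r² π₀`. The Lipschitz bound `g_s(t s + h u) ≤ g_s(t s) + L h |u|` splits this into
`h g_s(t s) R(K) + L h² κ`. At the target action, `0 ≤ ρ̂ ≤ ρ + B` gives `ρ̂² ≤ ρ² + B² + 2 B ρ`,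
and `ρ² π₀ = ρ π₁`.
-/

theorem integral_mul_le_of_abs_sub_le {μ : Measure ℝ} {k f : ℝ → ℝ} {M : ℝ} (hk : 0 ≤ k)
    (hk_int : Integrable k μ) (hku_int : Integrable (fun u => |u| * k u) μ)
    (hf : AEStronglyMeasurable f μ) (hfM : ∀ u, |f u - f 0| ≤ M * |u|) :
    ∫ u, k u * f u ∂μ ≤ f 0 * (∫ u, k u ∂μ) + M * ∫ u, |u| * k u ∂μ := by
  have hbound_int : Integrable (fun u => f 0 * k u + M * (|u| * k u)) μ :=
    (hk_int.const_mul _).add (hku_int.const_mul _)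
  have hf_le : ∀ u, f u ≤ f 0 + M * |u| := fun u => by linarith [(abs_le.mp (hfM u)).2]
  have habs_le : ∀ u, |f u| ≤ |f 0| + M * |u| := fun u => by
    linarith [abs_sub_abs_le_abs_sub (f u) (f 0), hfM u]
  have hkf_int : Integrable (fun u => k u * f u) μ := by
    refine Integrable.mono' ((hk_int.const_mul |f 0|).add (hku_int.const_mul M))
      (hk_int.aestronglyMeasurable.mul hf) (Filter.Eventually.of_forall fun u => ?_)
    show |k u * f u| ≤ |f 0| * k u + M * (|u| * k u)
    rw [abs_mul, abs_of_nonneg (hk u)]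
    nlinarith [mul_le_mul_of_nonneg_left (habs_le u) (hk u)]
  calc ∫ u, k u * f u ∂μ ≤ ∫ u, (f 0 * k u + M * (|u| * k u)) ∂μ :=
        integral_mono hkf_int hbound_int fun u => by
          nlinarith [mul_le_mul_of_nonneg_left (hf_le u) (hk u)]
    _ = f 0 * (∫ u, k u ∂μ) + M * ∫ u, |u| * k u ∂μ := by
        rw [integral_add (hk_int.const_mul _) (hku_int.const_mul _), integral_const_mul,
          integral_const_mul]

theorem integral_comp_sub_div_mul_eq (k g : ℝ → ℝ) (c : ℝ) {h : ℝ} (hh : 0 < h) :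
    ∫ a, k ((a - c) / h) * g a = h * ∫ u, k u * g (c + h * u) := by
  have hcomp : (fun a => k ((a - c) / h) * g a)
      = fun a => (fun u => k u * g (c + h * u)) ((a - c) / h) := by
    funext a
    dsimp only
    rw [mul_div_cancel₀ (a - c) hh.ne', add_sub_cancel]
  rw [hcomp, integral_sub_right_eq_self (fun x => k (x / h) * g (c + h * (x / h))) c,
    Measure.integral_comp_div (fun u => k u * g (c + h * u)) h, abs_of_pos hh, smul_eq_mul]

theorem integral_kernel_smoothing_le {k g : ℝ → ℝ} {L : ℝ} (hk : 0 ≤ k) (hk_int : Integrable k)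
    (hku_int : Integrable fun u => |u| * k u) (hg : ∀ x y, |g x - g y| ≤ L * |x - y|)
    (c : ℝ) {h : ℝ} (hh : 0 < h) :
    ∫ a, k ((a - c) / h) * g a ≤ h * (g c * (∫ u, k u) + L * h * ∫ u, |u| * k u) := by
  have hL : 0 ≤ L := (abs_nonneg _).trans (by simpa using hg 1 0)
  have hg_cont : Continuous g :=
    (LipschitzWith.of_dist_le_mul (K := ⟨L, hL⟩) fun x y => hg x y).continuous
  have hshift : ∀ u, |g (c + h * u) - g (c + h * 0)| ≤ L * h * |u| := fun u => by
    simpa [abs_mul, abs_of_pos hh, mul_assoc] using hg (c + h * u) c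
  have hrescaled := integral_mul_le_of_abs_sub_le (f := fun u => g (c + h * u)) hk hk_int hku_int
    (hg_cont.comp (by fun_prop : Continuous fun u => c + h * u)).aestronglyMeasurable hshift
  rw [integral_comp_sub_div_mul_eq k g c hh]
  simp only [mul_zero, add_zero] at hrescaled
  exact mul_le_mul_of_nonneg_left hrescaled hh.le

theorem sq_le_sq_add_of_abs_sub_le {x y b : ℝ} (hx : 0 ≤ x) (hxy : |x - y| ≤ b) :
    x ^ 2 ≤ y ^ 2 + (b ^ 2 + 2 * b * y) := by
  have : x ≤ y + b := by linarith [(abs_le.mp hxy).2]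
  nlinarith

theorem sq_mul_sq_mul_le_of_abs_sub_div_le {ρhat p0 p1 r b : ℝ} (hp0 : 0 < p0) (hρhat : 0 ≤ ρhat)
    (hb : |ρhat - p1 / p0| ≤ b) :
    ρhat ^ 2 * r ^ 2 * p0 ≤ p1 / p0 * r ^ 2 * p1 + r ^ 2 * (b ^ 2 + 2 * b * (p1 / p0)) * p0 := by
  have hρ : p1 / p0 * r ^ 2 * p1 = (p1 / p0) ^ 2 * r ^ 2 * p0 := by field_simp
  calc ρhat ^ 2 * r ^ 2 * p0 = ρhat ^ 2 * (r ^ 2 * p0) := by ring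
    _ ≤ ((p1 / p0) ^ 2 + (b ^ 2 + 2 * b * (p1 / p0))) * (r ^ 2 * p0) := by
        gcongr
        exact sq_le_sq_add_of_abs_sub_le hρhat hb
    _ = p1 / p0 * r ^ 2 * p1 + r ^ 2 * (b ^ 2 + 2 * b * (p1 / p0)) * p0 := by
        rw [hρ]; ring

theorem stmt_12_general {S : Type*} [Fintype S]
    (p0 p1 : ℝ × S → ℝ) (hp0pos : ∀ x, 0 < p0 x)
    (t : S → ℝ) (r : ℝ × S → ℝ)
    (rhoHat : ℝ × S → ℝ) (hrhoHat : ∀ x, 0 ≤ rhoHat x)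
    (B : ℝ × S → ℝ)
    (hBbound : ∀ x, |rhoHat x - p1 x / p0 x| ≤ B x)
    (K : ℝ → ℝ)
    (hK2 : Integrable (fun u => (K u) ^ 2))
    (hK2u : Integrable (fun u => |u| * (K u) ^ 2))
    (L : ℝ)
    (hLip : ∀ (s : S) (x y : ℝ),
      |(rhoHat (x, s)) ^ 2 * (r (x, s)) ^ 2 * p0 (x, s)
        - (rhoHat (y, s)) ^ 2 * (r (y, s)) ^ 2 * p0 (y, s)| ≤ L * |x - y|)
    (h : ℝ) (hh : 0 < h) :
    (1 / h ^ 2) * ∑ s : S, ∫ a, (K ((a - t s) / h)) ^ 2 *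
        ((rhoHat (a, s)) ^ 2 * (r (a, s)) ^ 2 * p0 (a, s))
      ≤ ((∫ u, (K u) ^ 2) / h) *
          ∑ s : S, ((p1 (t s, s) / p0 (t s, s)) * (r (t s, s)) ^ 2 * p1 (t s, s)
            + (r (t s, s)) ^ 2
                * ((B (t s, s)) ^ 2 + 2 * B (t s, s) * (p1 (t s, s) / p0 (t s, s)))
                * p0 (t s, s))
        + (Fintype.card S : ℝ) * L * ∫ u, |u| * (K u) ^ 2 := by
  set g : S → ℝ → ℝ := fun s a => rhoHat (a, s) ^ 2 * r (a, s) ^ 2 * p0 (a, s)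
  set RK := ∫ u, K u ^ 2
  set κ := ∫ u, |u| * K u ^ 2
  have hsmooth : ∀ s, ∫ a, K ((a - t s) / h) ^ 2 * g s a ≤ h * (g s (t s) * RK + L * h * κ) :=
    fun s => integral_kernel_smoothing_le (k := fun u => K u ^ 2) (fun u => sq_nonneg (K u))
      hK2 hK2u (hLip s) (t s) hh
  have hweight : ∀ s, g s (t s) ≤ _ := fun s =>
    sq_mul_sq_mul_le_of_abs_sub_div_le (r := r (t s, s)) (hp0pos (t s, s))
      (hrhoHat (t s, s)) (hBbound (t s, s))
  have hRK : 0 ≤ RK / h := div_nonneg (integral_nonneg fun u => sq_nonneg (K u)) hh.le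
  calc (1 / h ^ 2) * ∑ s, ∫ a, K ((a - t s) / h) ^ 2 * g s a
      ≤ (1 / h ^ 2) * ∑ s, h * (g s (t s) * RK + L * h * κ) := by
        gcongr with s; exact hsmooth s
    _ = RK / h * ∑ s, g s (t s) + Fintype.card S * L * κ := by
        simp only [mul_add, Finset.sum_add_distrib, Finset.sum_const, Finset.card_univ,
          nsmul_eq_mul, ← Finset.mul_sum, ← Finset.sum_mul]
        field_simp
    _ ≤ _ := by gcongr with s; exact hweight s

/-- Continuous-action second-moment bound (Proposition 4, continuous case):
with densities `p0 > 0`, `p1 ≥ 0` on `ℝ × S`, `ρ = p1/p0`, nonnegative rewards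
and nonnegative estimated weights with `|rhoHat - ρ| ≤ B` pointwise (`B ≥ 0`),
a kernel `K` with `R(K) = ∫ K² < ∞` and `κ = ∫ |u| K(u)² du < ∞`, and
`a ↦ rhoHat² r² p0` bounded and `L`-Lipschitz for each state, the second
moment of a single kernel-smoothed importance sampling term is bounded by
`(R(K)/h) ∑_s (ρ r² p1 + r² (B² + 2 B ρ) p0)` along the target policy,
plus `|S| L κ`. -/
theorem stmt_12 {S : Type*} [Fintype S]
    (p0 p1 : ℝ × S → ℝ) (hp0pos : ∀ x, 0 < p0 x) (hp1nonneg : ∀ x, 0 ≤ p1 x)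
    (hp0int : ∀ s : S, Integrable (fun a => p0 (a, s)))
    (hp0sum : ∑ s : S, ∫ a, p0 (a, s) = 1)
    (hp1int : ∀ s : S, Integrable (fun a => p1 (a, s)))
    (hp1sum : ∑ s : S, ∫ a, p1 (a, s) = 1)
    (t : S → ℝ) (r : ℝ × S → ℝ) (hr : ∀ x, 0 ≤ r x)
    (rhoHat : ℝ × S → ℝ) (hrhoHat : ∀ x, 0 ≤ rhoHat x)
    (B : ℝ × S → ℝ) (hB : ∀ x, 0 ≤ B x)
    (hBbound : ∀ x, |rhoHat x - p1 x / p0 x| ≤ B x)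
    (K : ℝ → ℝ) (hKmeas : Measurable K)
    (hK2 : Integrable (fun u => (K u) ^ 2))
    (hK2u : Integrable (fun u => |u| * (K u) ^ 2))
    (L : ℝ)
    (hLip : ∀ (s : S) (x y : ℝ),
      |(rhoHat (x, s)) ^ 2 * (r (x, s)) ^ 2 * p0 (x, s)
        - (rhoHat (y, s)) ^ 2 * (r (y, s)) ^ 2 * p0 (y, s)| ≤ L * |x - y|)
    (hbd : ∀ s : S, ∃ C, ∀ x : ℝ,
      |(rhoHat (x, s)) ^ 2 * (r (x, s)) ^ 2 * p0 (x, s)| ≤ C)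
    (h : ℝ) (hh : 0 < h) :
    (1 / h ^ 2) * ∑ s : S, ∫ a, (K ((a - t s) / h)) ^ 2 *
        ((rhoHat (a, s)) ^ 2 * (r (a, s)) ^ 2 * p0 (a, s))
      ≤ ((∫ u, (K u) ^ 2) / h) *
          ∑ s : S, ((p1 (t s, s) / p0 (t s, s)) * (r (t s, s)) ^ 2 * p1 (t s, s)
            + (r (t s, s)) ^ 2
                * ((B (t s, s)) ^ 2 + 2 * B (t s, s) * (p1 (t s, s) / p0 (t s, s)))
                * p0 (t s, s))
        + (Fintype.card S : ℝ) * L * ∫ u, |u| * (K u) ^ 2 :=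
  stmt_12_general p0 p1 hp0pos t r rhoHat hrhoHat B hBbound K hK2 hK2u L hLip h hh
end
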